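/- Let L be an operator on a Hilbert space with block structure such that -JL is Hermitian and non-negative definite, α a real number with ‖αL‖ < 1, and K_α = L(I + αJL)^{-1}. Then -JK_α is Hermitian and non-negative definite. -/

import Mathlib

/-!
Writing `M = -J L`, one has `-J K_α = M (1 - α M)⁻¹`. As `Jᴴ = -J` and `J² = -1`, `J` is unitary, so
`‖α M‖ = ‖α L‖ < 1` and the self-adjoint element `1 - α M` is strictly positive. Its inverse is then
nonnegative and commutes with `M ≥ 0`, and in a C⋆-algebra the product of commuting nonnegative
elements is nonnegative.
-/

open Matrix
open scoped Classical ComplexOrder Matrix.Norms.L2Operator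

/-- The `2m × 2m` block-diagonal matrix `J_m` with diagonal blocks `[[0,1],[-1,0]]`. -/
def Jmat (m : ℕ) : Matrix (Fin (2 * m)) (Fin (2 * m)) ℂ :=
  fun i j => if i.val % 2 = 0 ∧ j.val = i.val + 1 then 1
    else if j.val % 2 = 0 ∧ i.val = j.val + 1 then -1 else 0

open scoped MatrixOrder

section CStarAlgebra

variable {A : Type*} [CStarAlgebra A] [PartialOrder A] [StarOrderedRing A]

lemma IsSelfAdjoint.isStrictlyPositive_one_sub {b : A} (hb : IsSelfAdjoint b) (h : ‖b‖ < 1) :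
    IsStrictlyPositive (1 - b) := by
  refine (isUnit_one_sub_of_norm_lt_one h).isStrictlyPositive (sub_nonneg.mpr ?_)
  calc b ≤ algebraMap ℝ A ‖b‖ := hb.le_algebraMap_norm_self
    _ ≤ algebraMap ℝ A 1 := by gcongr
    _ = 1 := map_one _

lemma mul_ringInverse_one_sub_smul_nonneg {a : A} (ha : 0 ≤ a) {r : ℝ} (hr : ‖r • a‖ < 1) :
    0 ≤ a * Ring.inverse (1 - r • a) := by
  have hpos := ((IsSelfAdjoint.all r).smul ha.isSelfAdjoint).isStrictlyPositive_one_sub hr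
  have hcomm : Commute a (1 - r • a) :=
    (Commute.one_right a).sub_right ((Commute.refl a).smul_right r)
  refine Commute.mul_nonneg ha hpos.ringInverse.nonneg ?_
  obtain ⟨u, hu⟩ := hpos.isUnit
  rw [← hu] at hcomm ⊢
  rw [Ring.inverse_unit]
  exact hcomm.units_inv_right

end CStarAlgebra

def Jmat.partner {m : ℕ} (i : Fin (2 * m)) : Fin (2 * m) :=
  ⟨if (i : ℕ) % 2 = 0 then i + 1 else i - 1, by split_ifs <;> omega⟩

lemma Jmat_apply (m : ℕ) (i j : Fin (2 * m)) :
    Jmat m i j = if j = Jmat.partner i then (if (i : ℕ) % 2 = 0 then 1 else -1) else 0 := by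
  simp only [Jmat, Jmat.partner, Fin.ext_iff]
  split_ifs <;> first | rfl | (exfalso; omega)

lemma Jmat_conjTranspose (m : ℕ) : (Jmat m)ᴴ = -Jmat m := by
  ext i j
  simp only [conjTranspose_apply, Matrix.neg_apply]
  unfold Jmat
  split_ifs <;> first | (exfalso; omega) | simp

lemma Jmat_mul_self (m : ℕ) : Jmat m * Jmat m = -1 := by
  ext i k
  simp only [mul_apply, Jmat_apply m i, ite_mul, zero_mul, Finset.sum_ite_eq', Finset.mem_univ,
    if_true]
  simp only [Jmat_apply, Matrix.neg_apply, one_apply, Jmat.partner, Fin.ext_iff]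
  split_ifs <;> first | omega | norm_num

lemma Jmat_mem_unitary (m : ℕ) : Jmat m ∈ unitary (Matrix (Fin (2 * m)) (Fin (2 * m)) ℂ) := by
  rw [Unitary.mem_iff, star_eq_conjTranspose, Jmat_conjTranspose, neg_mul, mul_neg, Jmat_mul_self,
    neg_neg, and_self]

lemma norm_smul_negJmat_mul (m : ℕ) (L : Matrix (Fin (2 * m)) (Fin (2 * m)) ℂ) (c : ℂ) :
    ‖c • (-Jmat m * L)‖ = ‖c • L‖ := by
  rw [neg_mul, smul_neg, norm_neg, ← mul_smul_comm,
    CStarRing.norm_mem_unitary_mul _ (Jmat_mem_unitary m)]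

theorem negJ_K_posSemidef_general (m : ℕ) (L : Matrix (Fin (2 * m)) (Fin (2 * m)) ℂ)
    (α : ℝ) (hL : ((-(Jmat m)) * L).PosSemidef)
    (hnorm : ‖(α : ℂ) • L‖ < 1) :
    ((-(Jmat m)) * (L * (1 + (α : ℂ) • (Jmat m * L))⁻¹)).PosSemidef := by
  set M := -Jmat m * L with hM
  have hK : -Jmat m * (L * (1 + (α : ℂ) • (Jmat m * L))⁻¹) = M * Ring.inverse (1 - α • M) := by
    rw [← mul_assoc, nonsing_inv_eq_ringInverse, hM, neg_mul, smul_neg, sub_neg_eq_add,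
      Complex.coe_smul]
  rw [hK]
  refine LE.le.posSemidef (mul_ringInverse_one_sub_smul_nonneg hL.nonneg ?_)
  rwa [← Complex.coe_smul, norm_smul_negJmat_mul]

/-- If `-JL` is Hermitian non-negative definite and `‖αL‖ < 1` (operator norm),
then `-JK_α` is Hermitian non-negative definite, where `K_α = L (I + αJL)⁻¹`. -/
theorem negJ_K_posSemidef (m : ℕ) (L : Matrix (Fin (2 * m)) (Fin (2 * m)) ℂ)
    (hskew : Lᵀ = -L) (α : ℝ) (hL : ((-(Jmat m)) * L).PosSemidef)
    (hnorm : ‖(α : ℂ) • L‖ < 1) :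
    ((-(Jmat m)) * (L * (1 + (α : ℂ) • (Jmat m * L))⁻¹)).PosSemidef :=
  negJ_K_posSemidef_general m L α hL hnorm
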